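/- Let n, d, d' be positive integers and λ > 0. For each i = 1,…,n let h_i ∈ ℝ^d and let ℓ_i : ℝ^{d'} → ℝ be differentiable. Define L_λ(W) = (1/n)·Σ_{i=1}^n ℓ_i(W h_i) + (λ/2)·‖W‖_F² for W ∈ ℝ^{d'×d}, and define the FACT matrix F := −(1/(nλ))·Σ_{i=1}^n (W^⊤ ∇ℓ_i(W h_i)) h_i^⊤ ∈ ℝ^{d×d}. If W is a critical point of L_λ, then W^⊤ W = F^⊤, i.e. W^⊤ W = −(1/(nλ))·Σ_{i=1}^n h_i (W^⊤ ∇ℓ_i(W h_i))^⊤. -/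

import Mathlib

open Matrix

attribute [local instance] Matrix.frobeniusSeminormedAddCommGroup
  Matrix.frobeniusNormedAddCommGroup Matrix.frobeniusNormedSpace

/-- The gradient of a function `f : ℝ^k → ℝ`, as a plain vector `Fin k → ℝ`. -/
noncomputable def grad {k : ℕ} (f : EuclideanSpace ℝ (Fin k) → ℝ) (x : Fin k → ℝ) :
    Fin k → ℝ :=
  WithLp.equiv 2 (Fin k → ℝ) <| gradient f ((WithLp.equiv 2 (Fin k → ℝ)).symm x)

/-!
The partial derivative of `L_λ` in the entry `W_ab` is
`(1/n) ∑ᵢ (∇ℓᵢ(W hᵢ))_a (hᵢ)_b + λ W_ab`, so at a critical point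
`W = -(1/(nλ)) ∑ᵢ ∇ℓᵢ(W hᵢ) hᵢᵀ`. Multiplying on the left by `Wᵀ` gives
`Wᵀ W = F`, and since `Wᵀ W` is symmetric it also equals `Fᵀ`.
-/

section

variable {n m k : ℕ}

lemma single_one_mulVec {α ι κ : Type*} [NonAssocSemiring α] [Fintype κ] [DecidableEq ι]
    [DecidableEq κ] (i : ι) (j : κ) (v : κ → α) :
    single i j (1 : α) *ᵥ v = Pi.single i (v j) := by
  rw [single_mulVec, one_mul]
  rfl

lemma fderiv_apply_eq_grad_dotProduct (f : EuclideanSpace ℝ (Fin m) → ℝ) (x y : Fin m → ℝ) :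
    fderiv ℝ f (WithLp.toLp 2 x) (WithLp.toLp 2 y) = grad f x ⬝ᵥ y := by
  rw [← toDual_gradient, InnerProductSpace.toDual_apply_apply,
    EuclideanSpace.inner_eq_star_dotProduct]
  simp [grad, dotProduct_comm]

noncomputable def mulVecCLM (v : Fin k → ℝ) :
    Matrix (Fin m) (Fin k) ℝ →L[ℝ] EuclideanSpace ℝ (Fin m) :=
  LinearMap.toContinuousLinearMap <|
    (WithLp.linearEquiv 2 ℝ (Fin m → ℝ)).symm.toLinearMap ∘ₗ (mulVecBilin ℝ ℝ).flip v

@[simp] lemma mulVecCLM_apply (v : Fin k → ℝ) (V : Matrix (Fin m) (Fin k) ℝ) :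
    mulVecCLM v V = WithLp.toLp 2 (V *ᵥ v) := rfl

noncomputable def entryCLM (a : Fin m) (b : Fin k) : Matrix (Fin m) (Fin k) ℝ →L[ℝ] ℝ :=
  (entryLinearMap ℝ ℝ a b).toContinuousLinearMap

variable (lam : ℝ) (h : Fin n → Fin k → ℝ) (ℓ : Fin n → EuclideanSpace ℝ (Fin m) → ℝ)
  (W : Matrix (Fin m) (Fin k) ℝ)

-- Spelled exactly as the function in the hypothesis `hcrit` of the theorem, which is therefore
-- a statement about `fderiv ℝ (regularizedLoss lam h ℓ) W` as it stands.
noncomputable def regularizedLoss (V : Matrix (Fin m) (Fin k) ℝ) : ℝ :=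
  (1 / n : ℝ) * ∑ i, ℓ i ((WithLp.equiv 2 (Fin m → ℝ)).symm (V *ᵥ h i))
    + (lam / 2) * ∑ a, ∑ b, V a b ^ 2

noncomputable def regularizedLossGrad : Matrix (Fin m) (Fin k) ℝ :=
  (1 / n : ℝ) • ∑ i, vecMulVec (grad (ℓ i) (W *ᵥ h i)) (h i) + lam • W

lemma hasFDerivAt_regularizedLoss
    (hℓ : ∀ i, DifferentiableAt ℝ (ℓ i) (WithLp.toLp 2 (W *ᵥ h i))) :
    HasFDerivAt (regularizedLoss lam h ℓ)
      ((1 / n : ℝ) • ∑ i, (fderiv ℝ (ℓ i) (WithLp.toLp 2 (W *ᵥ h i))).comp (mulVecCLM (h i))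
        + (lam / 2) • ∑ a, ∑ b, (2 * W a b) • entryCLM a b) W := by
  have hentry (a : Fin m) (b : Fin k) :
      HasFDerivAt (fun V : Matrix (Fin m) (Fin k) ℝ => V a b ^ 2)
        ((2 * W a b) • entryCLM a b) W := by
    have hsq := ((entryCLM a b).hasFDerivAt (x := W)).pow 2
    -- `hsq` lives over the Frobenius normed structure and the goal over the default one; they
    -- agree only up to unfolding, which `exact` performs but `simpa` does not.
    simp only [Nat.reduceSub, pow_one, nsmul_eq_mul, Nat.cast_ofNat] at hsq
    exact hsq
  exact ((HasFDerivAt.fun_sum fun i _ =>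
      (hℓ i).hasFDerivAt.comp W (mulVecCLM (h i)).hasFDerivAt).const_mul _).fun_add
    ((HasFDerivAt.fun_sum fun a _ => HasFDerivAt.fun_sum fun b _ => hentry a b).const_mul _)

lemma fderiv_regularizedLoss_single
    (hℓ : ∀ i, DifferentiableAt ℝ (ℓ i) (WithLp.toLp 2 (W *ᵥ h i))) (a : Fin m) (b : Fin k) :
    fderiv ℝ (regularizedLoss lam h ℓ) W (single a b 1) = regularizedLossGrad lam h ℓ W a b := by
  rw [(hasFDerivAt_regularizedLoss lam h ℓ W hℓ).fderiv]
  simp only [regularizedLossGrad, entryCLM, _root_.add_apply, _root_.smul_apply,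
    _root_.sum_apply, ContinuousLinearMap.comp_apply, mulVecCLM_apply, single_one_mulVec,
    fderiv_apply_eq_grad_dotProduct, dotProduct_single, smul_eq_mul,
    LinearMap.coe_toContinuousLinearMap', entryLinearMap_apply, single_apply, ite_and, mul_ite,
    mul_one, mul_zero, Finset.sum_ite_irrel, Finset.sum_ite_eq, Finset.mem_univ, if_true,
    Finset.sum_const_zero, Matrix.add_apply, Matrix.smul_apply, Matrix.sum_apply, vecMulVec_apply]
  ring

lemma regularizedLossGrad_eq_zero_of_fderiv_eq_zero
    (hℓ : ∀ i, DifferentiableAt ℝ (ℓ i) (WithLp.toLp 2 (W *ᵥ h i)))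
    (hcrit : fderiv ℝ (regularizedLoss lam h ℓ) W = 0) :
    regularizedLossGrad lam h ℓ W = 0 := by
  ext a b
  rw [← fderiv_regularizedLoss_single lam h ℓ W hℓ, hcrit]
  rfl

lemma eq_smul_sum_vecMulVec_of_regularizedLossGrad_eq_zero (hlam : lam ≠ 0)
    (hW : regularizedLossGrad lam h ℓ W = 0) :
    W = (-(1 / (n * lam))) • ∑ i, vecMulVec (grad (ℓ i) (W *ᵥ h i)) (h i) := by
  have hlamW := eq_neg_of_add_eq_zero_right hW
  calc W = lam⁻¹ • lam • W := (inv_smul_smul₀ hlam W).symm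
    _ = _ := by rw [hlamW, smul_neg, smul_smul, ← neg_smul]; congr 2; ring

end

theorem fact_transpose_symmetrization_general
    (n d d' : ℕ)
    (lam : ℝ) (hlam : 0 < lam)
    (h : Fin n → Fin d → ℝ)
    (ℓ : Fin n → EuclideanSpace ℝ (Fin d') → ℝ)
    (hdiff : ∀ i, Differentiable ℝ (ℓ i))
    (W : Matrix (Fin d') (Fin d) ℝ)
    (F : Matrix (Fin d) (Fin d) ℝ)
    (hF : F = (-(1 / (n * lam))) •
      ∑ i, Matrix.vecMulVec (Wᵀ.mulVec (grad (ℓ i) (W.mulVec (h i)))) (h i))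
    (hcrit : fderiv ℝ
      (fun V : Matrix (Fin d') (Fin d) ℝ =>
        (1 / n : ℝ) * ∑ i, ℓ i ((WithLp.equiv 2 (Fin d' → ℝ)).symm (V.mulVec (h i)))
          + (lam / 2) * ∑ a : Fin d', ∑ b : Fin d, V a b ^ 2) W = 0) :
    Wᵀ * W = Fᵀ ∧
      Wᵀ * W = (-(1 / (n * lam))) •
        ∑ i, Matrix.vecMulVec (h i) (Wᵀ.mulVec (grad (ℓ i) (W.mulVec (h i)))) := by
  have hW := eq_smul_sum_vecMulVec_of_regularizedLossGrad_eq_zero lam h ℓ W hlam.ne'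
    (regularizedLossGrad_eq_zero_of_fderiv_eq_zero lam h ℓ W (fun i => hdiff i _) hcrit)
  have hWW : Wᵀ * W = F := by
    nth_rewrite 2 [hW]
    simp only [hF, Matrix.mul_smul, Matrix.mul_sum, mul_vecMulVec]
  have hWWF : Wᵀ * W = Fᵀ := by rw [← hWW, transpose_mul, transpose_transpose]
  refine ⟨hWWF, ?_⟩
  simp only [hWWF, hF, transpose_smul, transpose_sum, transpose_vecMulVec]

/-- **Transpose symmetrization of the FACT.** If `W` is a critical point of the regularized
loss, then `Wᵀ W = Fᵀ` where `F` is the FACT matrix, i.e.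
`Wᵀ W = -(1/(nλ)) ∑ i h_i (Wᵀ ∇ℓ_i(W h_i))ᵀ`. -/
theorem fact_transpose_symmetrization
    (n d d' : ℕ) (hn : 0 < n) (hd : 0 < d) (hd' : 0 < d')
    (lam : ℝ) (hlam : 0 < lam)
    (h : Fin n → Fin d → ℝ)
    (ℓ : Fin n → EuclideanSpace ℝ (Fin d') → ℝ)
    (hdiff : ∀ i, Differentiable ℝ (ℓ i))
    (W : Matrix (Fin d') (Fin d) ℝ)
    (F : Matrix (Fin d) (Fin d) ℝ)
    (hF : F = (-(1 / (n * lam))) •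
      ∑ i, Matrix.vecMulVec (Wᵀ.mulVec (grad (ℓ i) (W.mulVec (h i)))) (h i))
    (hcrit : fderiv ℝ
      (fun V : Matrix (Fin d') (Fin d) ℝ =>
        (1 / n : ℝ) * ∑ i, ℓ i ((WithLp.equiv 2 (Fin d' → ℝ)).symm (V.mulVec (h i)))
          + (lam / 2) * ∑ a : Fin d', ∑ b : Fin d, V a b ^ 2) W = 0) :
    Wᵀ * W = Fᵀ ∧
      Wᵀ * W = (-(1 / (n * lam))) •
        ∑ i, Matrix.vecMulVec (h i) (Wᵀ.mulVec (grad (ℓ i) (W.mulVec (h i)))) :=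
  fact_transpose_symmetrization_general n d d' lam hlam h ℓ hdiff W F hF hcrit
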